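/- Under the setup of the sparsification lemma (S ⊆ C with Top_ℓ(d(C,S)) ≤ α·OPT; induced weighted instance with weights w), if T ⊆ C is a ρ-approximate ℓ-centrum solution for the weighted instance (i.e., the weighted Top_ℓ-cost of T is at most ρ·OPT'), then Top_ℓ(d(C,T)) ≤ (α + 2ρ(α + 1))·OPT. -/

import Mathlib

open Finset

/-- `Topl ℓ v` : the sum of the `ℓ` largest entries of `v`, expressed as the
maximum subset-sum over subsets of cardinality `ℓ` (these agree for `ℓ ≤ n`). -/
noncomputable def Topl {ι : Type*} [Fintype ι] (ℓ : ℕ) (v : ι → ℝ) : ℝ :=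
  sSup {x : ℝ | ∃ S : Finset ι, S.card = ℓ ∧ x = ∑ i ∈ S, v i}

/-
Move every client `j` to its nearest point `σ j` of `S`. By the triangle inequality, for any
centre set `U` the distance from `j` to `U` and the distance from `σ j` to `U` differ by at most
`dist j (σ j) = d(j, S)`, and `Top_ℓ` is subadditive; so each of the two ℓ-centrum costs exceeds
the other by at most `Top_ℓ(d(C, S)) ≤ α·OPT`. Taking the infimum over all `T*` with `|T*| ≤ k`
gives `OPT' ≤ (α + 1)·OPT`, and applied to `T` it gives
`Top_ℓ(d(C, T)) ≤ α·OPT + ρ·OPT' ≤ (α + ρ(α + 1))·OPT`.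
-/

section Topl

variable {ι : Type*} [Fintype ι] {ℓ : ℕ}

lemma bddAbove_Topl_set (ℓ : ℕ) (v : ι → ℝ) :
    BddAbove {x : ℝ | ∃ S : Finset ι, S.card = ℓ ∧ x = ∑ i ∈ S, v i} := by
  refine (Set.finite_range fun S : Finset ι => ∑ i ∈ S, v i).subset ?_ |>.bddAbove
  rintro x ⟨S, -, rfl⟩
  exact ⟨S, rfl⟩

lemma sum_le_Topl {S : Finset ι} (hS : S.card = ℓ) (v : ι → ℝ) :
    ∑ i ∈ S, v i ≤ Topl ℓ v :=
  le_csSup (bddAbove_Topl_set ℓ v) ⟨S, hS, rfl⟩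

lemma Topl_nonneg {v : ι → ℝ} (hv : ∀ i, 0 ≤ v i) : 0 ≤ Topl ℓ v := by
  refine Real.sSup_nonneg ?_
  rintro x ⟨S, -, rfl⟩
  exact sum_nonneg fun i _ => hv i

lemma Topl_of_card_lt (h : Fintype.card ι < ℓ) (v : ι → ℝ) : Topl ℓ v = 0 := by
  have hempty : {x : ℝ | ∃ S : Finset ι, S.card = ℓ ∧ x = ∑ i ∈ S, v i} = ∅ := by
    refine Set.eq_empty_of_forall_notMem ?_
    rintro x ⟨S, hS, -⟩
    exact absurd (hS ▸ S.card_le_univ) (not_le.mpr h)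
  rw [Topl, hempty, Real.sSup_empty]

lemma Topl_le_add {w u v : ι → ℝ} (h : ∀ i, w i ≤ u i + v i) :
    Topl ℓ w ≤ Topl ℓ u + Topl ℓ v := by
  by_cases hℓ : Fintype.card ι < ℓ
  · simp only [Topl_of_card_lt hℓ, add_zero, le_refl]
  obtain ⟨S₀, -, hS₀⟩ := exists_subset_card_eq (s := (univ : Finset ι)) (by simpa using hℓ)
  refine csSup_le ⟨_, S₀, hS₀, rfl⟩ ?_
  rintro x ⟨S, hS, rfl⟩
  calc ∑ i ∈ S, w i ≤ ∑ i ∈ S, u i + ∑ i ∈ S, v i := by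
        rw [← sum_add_distrib]; exact sum_le_sum fun i _ => h i
    _ ≤ Topl ℓ u + Topl ℓ v := add_le_add (sum_le_Topl hS u) (sum_le_Topl hS v)

end Topl

section Centres

variable {X ι : Type*} [MetricSpace X] [Fintype ι]

lemma inf'_dist_le_dist_add_inf'_dist {U : Finset X} (hU : U.Nonempty) (x y : X) :
    U.inf' hU (fun a => dist x a) ≤ dist x y + U.inf' hU (fun a => dist y a) := by
  obtain ⟨a, ha, hya⟩ := U.exists_mem_eq_inf' hU (fun a => dist y a)
  calc U.inf' hU (fun a => dist x a) ≤ dist x a := inf'_le _ ha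
    _ ≤ dist x y + dist y a := dist_triangle x y a
    _ = dist x y + U.inf' hU (fun a => dist y a) := by rw [hya]

lemma Topl_inf'_dist_le_add (ℓ : ℕ) {U : Finset X} (hU : U.Nonempty)
    (f g : ι → X) :
    Topl ℓ (fun j => U.inf' hU (fun a => dist (f j) a)) ≤
      Topl ℓ (fun j => dist (f j) (g j)) + Topl ℓ (fun j => U.inf' hU (fun a => dist (g j) a)) :=
  Topl_le_add fun j => inf'_dist_le_dist_add_inf'_dist hU (f j) (g j)

/-- The ℓ-centrum costs of all solutions with at most `k` centres when client `j` sits at `f j`. -/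
def lCentrumCosts (k ℓ : ℕ) (f : ι → X) : Set ℝ :=
  {x : ℝ | ∃ (T : Finset X) (hT : T.Nonempty),
    T.card ≤ k ∧ x = Topl ℓ (fun j => T.inf' hT (fun a => dist (f j) a))}

lemma nonneg_of_mem_lCentrumCosts {k ℓ : ℕ} {f : ι → X} {x : ℝ} (hx : x ∈ lCentrumCosts k ℓ f) :
    0 ≤ x := by
  obtain ⟨T, hT, -, rfl⟩ := hx
  exact Topl_nonneg fun _ => le_inf' hT _ fun _ _ => dist_nonneg

lemma sInf_lCentrumCosts_le_add {k : ℕ} (hk : ∃ T : Finset X, T.Nonempty ∧ T.card ≤ k) (ℓ : ℕ)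
    (f g : ι → X) :
    sInf (lCentrumCosts k ℓ f) ≤
      Topl ℓ (fun j => dist (f j) (g j)) + sInf (lCentrumCosts k ℓ g) := by
  obtain ⟨T₀, hT₀, hT₀k⟩ := hk
  rw [← sub_le_iff_le_add']
  refine le_csInf ⟨_, T₀, hT₀, hT₀k, rfl⟩ ?_
  rintro x ⟨T, hT, hTk, rfl⟩
  rw [sub_le_iff_le_add']
  calc sInf (lCentrumCosts k ℓ f) ≤ Topl ℓ (fun j => T.inf' hT (fun a => dist (f j) a)) :=
        csInf_le ⟨0, fun _ => nonneg_of_mem_lCentrumCosts⟩ ⟨T, hT, hTk, rfl⟩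
    _ ≤ _ := Topl_inf'_dist_le_add ℓ hT f g

end Centres

theorem stmt7_general {C : Type*} [Fintype C] [MetricSpace C] (k ℓ : ℕ)
    (α ρ : ℝ) (hρ : 1 ≤ ρ)
    (S : Finset C) (hS : S.Nonempty)
    -- σ assigns each point to a nearest point of S (ties broken arbitrarily)
    (σ : C → C)
    (hσnear : ∀ j, dist j (σ j) = S.inf' hS (fun a => dist j a))
    (OPT : ℝ)
    (hOPT : OPT = sInf {x : ℝ | ∃ (T : Finset C) (hT : T.Nonempty),
      T.card ≤ k ∧ x = Topl ℓ (fun j => T.inf' hT (fun a => dist j a))})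
    -- S is an α-approximate ℓ-centrum solution
    (hScost : Topl ℓ (fun j => S.inf' hS (fun a => dist j a)) ≤ α * OPT)
    -- OPT' : optimal ℓ-centrum value of the weighted instance (each agent j moved to σ j)
    (OPT' : ℝ)
    (hOPT' : OPT' = sInf {x : ℝ | ∃ (T : Finset C) (hT : T.Nonempty),
      T.card ≤ k ∧ x = Topl ℓ (fun j => T.inf' hT (fun a => dist (σ j) a))})
    -- T is a ρ-approximate solution for the weighted instance
    (T : Finset C) (hT : T.Nonempty) (hTcard : T.card ≤ k)
    (hTapx : Topl ℓ (fun j => T.inf' hT (fun a => dist (σ j) a)) ≤ ρ * OPT') :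
    Topl ℓ (fun j => T.inf' hT (fun a => dist j a)) ≤ (α + 2 * ρ * (α + 1)) * OPT := by
  have hmove : Topl ℓ (fun j => dist j (σ j)) ≤ α * OPT := by simpa only [hσnear] using hScost
  have hmove' : Topl ℓ (fun j => dist (σ j) j) ≤ α * OPT := by simpa only [dist_comm] using hmove
  have hOPT_eq : OPT = sInf (lCentrumCosts k ℓ id) := hOPT
  have hOPT'_eq : OPT' = sInf (lCentrumCosts k ℓ σ) := hOPT'
  have hOPT'_nonneg : 0 ≤ OPT' := hOPT'_eq ▸ Real.sInf_nonneg fun _ => nonneg_of_mem_lCentrumCosts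
  have hOPT'_le : OPT' ≤ α * OPT + OPT := by
    have hmoved : sInf (lCentrumCosts k ℓ σ) ≤
        Topl ℓ (fun j => dist (σ j) j) + sInf (lCentrumCosts k ℓ id) :=
      sInf_lCentrumCosts_le_add ⟨T, hT, hTcard⟩ ℓ σ id
    linarith
  have hT_move : Topl ℓ (fun j => T.inf' hT (fun a => dist j a)) ≤
      Topl ℓ (fun j => dist j (σ j)) + Topl ℓ (fun j => T.inf' hT (fun a => dist (σ j) a)) :=
    Topl_inf'_dist_le_add ℓ hT id σ
  calc Topl ℓ (fun j => T.inf' hT (fun a => dist j a))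
      ≤ α * OPT + ρ * OPT' := by linarith
    _ ≤ α * OPT + ρ * ((α + 1) * OPT) := by gcongr; linarith
    _ ≤ (α + 2 * ρ * (α + 1)) * OPT := by nlinarith

theorem stmt7 {C : Type*} [Fintype C] [MetricSpace C] (k ℓ : ℕ)
    (hk : 1 ≤ k) (hℓ1 : 1 ≤ ℓ) (hℓ : ℓ ≤ Fintype.card C) (α ρ : ℝ) (hρ : 1 ≤ ρ)
    (S : Finset C) (hS : S.Nonempty)
    -- σ assigns each point to a nearest point of S (ties broken arbitrarily)
    (σ : C → C) (hσmem : ∀ j, σ j ∈ S)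
    (hσnear : ∀ j, dist j (σ j) = S.inf' hS (fun a => dist j a))
    (OPT : ℝ)
    (hOPT : OPT = sInf {x : ℝ | ∃ (T : Finset C) (hT : T.Nonempty),
      T.card ≤ k ∧ x = Topl ℓ (fun j => T.inf' hT (fun a => dist j a))})
    -- S is an α-approximate ℓ-centrum solution
    (hScost : Topl ℓ (fun j => S.inf' hS (fun a => dist j a)) ≤ α * OPT)
    -- OPT' : optimal ℓ-centrum value of the weighted instance (each agent j moved to σ j)
    (OPT' : ℝ)
    (hOPT' : OPT' = sInf {x : ℝ | ∃ (T : Finset C) (hT : T.Nonempty),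
      T.card ≤ k ∧ x = Topl ℓ (fun j => T.inf' hT (fun a => dist (σ j) a))})
    -- T is a ρ-approximate solution for the weighted instance
    (T : Finset C) (hT : T.Nonempty) (hTcard : T.card ≤ k)
    (hTapx : Topl ℓ (fun j => T.inf' hT (fun a => dist (σ j) a)) ≤ ρ * OPT') :
    Topl ℓ (fun j => T.inf' hT (fun a => dist j a)) ≤ (α + 2 * ρ * (α + 1)) * OPT :=
  stmt7_general k ℓ α ρ hρ S hS σ hσnear OPT hOPT hScost OPT' hOPT' T hT hTcard hTapx
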